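/- arXiv:1907.01344 — 2 statements merged into one kernel-verified Lean document; each statement's English description precedes it below -/
import Mathlib

section
/- Let H be a procyclic group (a profinite group that is topologically generated by a single element). If the set of topological generators of H has cardinality less than 2^ℵ₀, then H is finite. -/
/-!
The topological generators of `H` form a closed subset `S`: `y ∈ S` iff `y` generates every
finite quotient `H ⧸ N` by an open normal subgroup. If `H` is infinite, `S` has no isolated
points. Given `x ∈ S` and `N` of index `n`, choose `N' ≤ N` of index `m > 2n`; then
`φ n < φ m`, so some `b` prime to `m` has `b ≡ 1 [MOD n]` but `b ≢ 1 [MOD m]`. The image of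
`x ^ b` generates `H ⧸ N'`, and by compactness it lifts to a topological generator of `H`
that lies in `x N` but differs from `x`. A nonempty compact perfect set contains a Cantor
scheme of perfect subsets, hence has at least `𝔠` points.
-/

open Cardinal Subgroup

theorem Perfect.continuum_le_mk_of_isCompact {α : Type*} [TopologicalSpace α] [T25Space α]
    {C : Set α} (hC : Perfect C) (hcpt : IsCompact C) (hne : C.Nonempty) : 𝔠 ≤ #C := by
  let P := {E : Set α // Perfect E ∧ E.Nonempty ∧ E ⊆ C}
  have hsplit (E : P) :
      ∃ F : Bool → P, (∀ b, (F b).1 ⊆ E.1) ∧ Disjoint (F false).1 (F true).1 := by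
    obtain ⟨E₀, E₁, ⟨hE₀, hne₀, hsub₀⟩, ⟨hE₁, hne₁, hsub₁⟩, hdisj⟩ := E.2.1.splitting E.2.2.1
    refine ⟨fun b => b.casesOn ⟨E₀, hE₀, hne₀, hsub₀.trans E.2.2.2⟩
      ⟨E₁, hE₁, hne₁, hsub₁.trans E.2.2.2⟩, fun b => ?_, hdisj⟩
    cases b
    exacts [hsub₀, hsub₁]
  choose split hsub hdisj using hsplit
  let A : List Bool → Set α := fun l => (l.foldr (fun b E => split E b) ⟨C, hC, hne, le_rfl⟩).1
  have hA : CantorScheme.Disjoint A := by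
    intro l a b hab
    cases a <;> cases b
    exacts [absurd rfl hab, hdisj _, (hdisj _).symm, absurd rfl hab]
  have hdom (x : ℕ → Bool) : x ∈ (CantorScheme.inducedMap A).1 := by
    refine IsCompact.nonempty_iInter_of_sequence_nonempty_isCompact_isClosed
      (fun n => A (PiNat.res x n)) (fun n => ?_) (fun n => (_ : P).2.2.1) hcpt
      (fun n => (_ : P).2.1.closed)
    rw [PiNat.res_succ]
    exact hsub _ _
  let f : (ℕ → Bool) → C := fun x => ⟨(CantorScheme.inducedMap A).2 ⟨x, hdom x⟩,
    (_ : P).2.2.2 (CantorScheme.map_mem ⟨x, hdom x⟩ 0)⟩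
  have hf : Function.Injective f := fun x y hxy =>
    congrArg Subtype.val <| hA.map_injective (congrArg Subtype.val hxy :
      (CantorScheme.inducedMap A).2 ⟨x, hdom x⟩ = (CantorScheme.inducedMap A).2 ⟨y, hdom y⟩)
  simpa using lift_mk_le_lift_mk_of_injective hf

namespace Nat

theorem exists_coprime_modEq_of_dvd {n m a : ℕ} [NeZero m] (hnm : n ∣ m) (ha : a.Coprime n) :
    ∃ b, b.Coprime m ∧ b ≡ a [MOD n] := by
  have : NeZero n := ⟨fun hn => NeZero.ne m (Nat.eq_zero_of_zero_dvd (hn ▸ hnm))⟩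
  obtain ⟨u, hu⟩ := ZMod.unitsMap_surjective hnm (ZMod.unitOfCoprime a ha)
  refine ⟨(u : ZMod m).val, ZMod.val_coe_unit_coprime u, ?_⟩
  rw [← ZMod.natCast_eq_natCast_iff, ZMod.natCast_val, ← ZMod.unitsMap_val hnm, hu,
    ZMod.coe_unitOfCoprime]

theorem exists_coprime_modEq_one_not_modEq_one {n m : ℕ} (hnm : n ∣ m) (hφ : φ n < φ m) :
    ∃ b, b.Coprime m ∧ b ≡ 1 [MOD n] ∧ ¬b ≡ 1 [MOD m] := by
  have : NeZero m := ⟨fun hm => by simp [hm] at hφ⟩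
  have : NeZero n := ⟨fun hn => NeZero.ne m (Nat.eq_zero_of_zero_dvd (hn ▸ hnm))⟩
  have hnot_inj : ¬Function.Injective (ZMod.unitsMap hnm) := fun hinj => by
    have := Fintype.card_le_of_injective _ hinj
    rw [ZMod.card_units_eq_totient, ZMod.card_units_eq_totient] at this
    omega
  obtain ⟨u, hu, hu1⟩ : ∃ u, ZMod.unitsMap hnm u = 1 ∧ u ≠ 1 := by
    simpa [injective_iff_map_eq_one] using hnot_inj
  refine ⟨(u : ZMod m).val, ZMod.val_coe_unit_coprime u, ?_, fun h => hu1 (Units.ext ?_)⟩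
  · rw [← ZMod.natCast_eq_natCast_iff, ZMod.natCast_val, ← ZMod.unitsMap_val hnm, hu]
    simp
  · rw [← ZMod.natCast_eq_natCast_iff, ZMod.natCast_zmod_val] at h
    simpa using h

theorem totient_lt_totient_of_dvd {n m : ℕ} (hnm : n ∣ m) (h : 2 * n < m) : φ n < φ m := by
  refine lt_of_le_of_ne (Nat.le_of_dvd (totient_pos.2 (by omega)) (totient_dvd_of_dvd hnm)) ?_
  intro heq
  rcases eq_or_eq_of_totient_eq_totient hnm heq with h' | h' <;> omega

end Nat

theorem Subgroup.zpowers_pow_eq_top_of_coprime {G : Type*} [Group G] [Finite G] {g : G}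
    (hg : zpowers g = ⊤) {b : ℕ} (hb : b.Coprime (Nat.card G)) : zpowers (g ^ b) = ⊤ := by
  have hord := orderOf_eq_card_of_zpowers_eq_top hg
  refine eq_top_of_card_eq _ ?_
  rw [Nat.card_zpowers, Nat.Coprime.orderOf_pow (hord ▸ hb.symm), hord]

theorem QuotientGroup.zpowers_mk_eq_top_iff {G : Type*} [Group G] (N : Subgroup G) [N.Normal]
    (g : G) : zpowers (g : G ⧸ N) = ⊤ ↔ zpowers g ⊔ N = ⊤ := by
  have h := comap_map_eq (QuotientGroup.mk' N) (zpowers g)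
  rw [QuotientGroup.ker_mk', MonoidHom.map_zpowers] at h
  rw [← h, ← comap_top (QuotientGroup.mk' N),
    (comap_injective (QuotientGroup.mk'_surjective N)).eq_iff]
  rfl

theorem QuotientGroup.zpowers_mk_eq_top_of_le {G : Type*} [Group G] {N₁ N₂ : Subgroup G}
    [N₁.Normal] [N₂.Normal] (h : N₁ ≤ N₂) {g : G} (hg : zpowers (g : G ⧸ N₁) = ⊤) :
    zpowers (g : G ⧸ N₂) = ⊤ := by
  rw [zpowers_mk_eq_top_iff] at hg ⊢
  exact top_le_iff.1 (hg ▸ sup_le_sup_left h _)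

theorem QuotientGroup.isClosed_preimage_mk {G : Type*} [Group G] [TopologicalSpace G]
    [IsTopologicalGroup G] {N : Subgroup G} (hN : IsOpen (N : Set G)) (s : Set (G ⧸ N)) :
    IsClosed (QuotientGroup.mk ⁻¹' s) :=
  have := discreteTopology hN
  (isClosed_discrete s).preimage continuous_mk

def topologicalGenerators (H : Type*) [Group H] [TopologicalSpace H] [IsTopologicalGroup H] :
    Set H :=
  {g | (Subgroup.closure {g}).topologicalClosure = ⊤}

namespace ProfiniteGrp

variable {H : Type*} [Group H] [TopologicalSpace H] [IsTopologicalGroup H] [CompactSpace H]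
  [TotallyDisconnectedSpace H]

theorem topologicalClosure_eq_top_iff {K : Subgroup H} :
    K.topologicalClosure = ⊤ ↔ ∀ N : OpenNormalSubgroup H, K ⊔ N = ⊤ := by
  constructor
  · intro hK N
    have hopen : IsOpen ((K ⊔ N : Subgroup H) : Set H) := isOpen_mono le_sup_right N.isOpen
    exact top_le_iff.1 <| hK ▸ topologicalClosure_minimal K le_sup_left (isClosed_of_isOpen _ hopen)
  · intro hK
    refine eq_top_iff.2 <| le_of_le_of_eq (le_sInf fun M hM => ?_)
      (closedSubgroup_eq_sInf_open ⟨_, K.isClosed_topologicalClosure⟩).symm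
    obtain ⟨hM, hKM⟩ := hM
    obtain ⟨N, hN⟩ := exist_openNormalSubgroup_sub_open_nhds_of_one hM M.one_mem
    exact (hK N).symm.le.trans (sup_le (K.le_topologicalClosure.trans hKM) hN)

theorem mem_topologicalGenerators_iff {x : H} :
    x ∈ topologicalGenerators H ↔
      ∀ N : OpenNormalSubgroup H, zpowers (x : H ⧸ (N : Subgroup H)) = ⊤ := by
  change (Subgroup.closure {x}).topologicalClosure = ⊤ ↔ _
  rw [← zpowers_eq_closure, topologicalClosure_eq_top_iff]
  exact forall_congr' fun N => (QuotientGroup.zpowers_mk_eq_top_iff _ x).symm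

theorem isClosed_topologicalGenerators : IsClosed (topologicalGenerators H) := by
  have : topologicalGenerators H = ⋂ N : OpenNormalSubgroup H,
      QuotientGroup.mk ⁻¹' {q : H ⧸ (N : Subgroup H) | zpowers q = ⊤} := by
    ext x
    simp [mem_topologicalGenerators_iff]
  rw [this]
  exact isClosed_iInter fun N => QuotientGroup.isClosed_preimage_mk N.isOpen _

theorem mk_pow_eq_mk_pow_iff {x : H} (hx : x ∈ topologicalGenerators H)
    (N : OpenNormalSubgroup H) {a b : ℕ} :
    (x : H ⧸ (N : Subgroup H)) ^ a = (x : H ⧸ (N : Subgroup H)) ^ b ↔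
      a ≡ b [MOD (N : Subgroup H).index] := by
  rw [pow_eq_pow_iff_modEq, orderOf_eq_card_of_zpowers_eq_top
    (mem_topologicalGenerators_iff.1 hx N), index_eq_card]

theorem exists_mem_topologicalGenerators_mk_eq_mk_pow {x : H}
    (hx : x ∈ topologicalGenerators H) (N : OpenNormalSubgroup H) {b : ℕ}
    (hb : b.Coprime (N : Subgroup H).index) :
    ∃ y ∈ topologicalGenerators H,
      (y : H ⧸ (N : Subgroup H)) = (x : H ⧸ (N : Subgroup H)) ^ b := by
  let F : OpenNormalSubgroup H → Set H := fun K =>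
    {z | (z : H ⧸ (N : Subgroup H)) = (x : H ⧸ (N : Subgroup H)) ^ b} ∩
      {z | zpowers (z : H ⧸ ((K ⊓ N : OpenNormalSubgroup H) : Subgroup H)) = ⊤}
  have hF_closed (K : OpenNormalSubgroup H) : IsClosed (F K) :=
    (QuotientGroup.isClosed_preimage_mk N.isOpen {q | q = (x : H ⧸ (N : Subgroup H)) ^ b}).inter
      (QuotientGroup.isClosed_preimage_mk (K ⊓ N).isOpen {q | zpowers q = ⊤})
  have hF_directed : Directed (· ⊇ ·) F := fun K₁ K₂ =>
    ⟨K₁ ⊓ K₂, fun _ hz => ⟨hz.1, QuotientGroup.zpowers_mk_eq_top_of_le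
      (inf_le_inf_right _ inf_le_left) hz.2⟩, fun _ hz => ⟨hz.1,
      QuotientGroup.zpowers_mk_eq_top_of_le (inf_le_inf_right _ inf_le_right) hz.2⟩⟩
  have hF_nonempty (K : OpenNormalSubgroup H) : (F K).Nonempty := by
    have : NeZero ((K ⊓ N : OpenNormalSubgroup H) : Subgroup H).index :=
      ⟨index_ne_zero_of_finite⟩
    obtain ⟨c, hc, hcb⟩ := Nat.exists_coprime_modEq_of_dvd
      (index_dvd_of_le (inf_le_right : K ⊓ N ≤ N)) hb
    refine ⟨x ^ c, ?_, ?_⟩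
    · simpa [QuotientGroup.mk_pow] using (mk_pow_eq_mk_pow_iff hx N).2 hcb
    · rw [Set.mem_ofPred_eq, QuotientGroup.mk_pow]
      exact zpowers_pow_eq_top_of_coprime (mem_topologicalGenerators_iff.1 hx _)
        (by rwa [← index_eq_card])
  have : Nonempty (OpenNormalSubgroup H) := ⟨N⟩
  obtain ⟨y, hy⟩ := IsCompact.nonempty_iInter_of_directed_nonempty_isCompact_isClosed F
    hF_directed hF_nonempty (fun K => (hF_closed K).isCompact) hF_closed
  rw [Set.mem_iInter] at hy
  exact ⟨y, mem_topologicalGenerators_iff.2 fun K =>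
    QuotientGroup.zpowers_mk_eq_top_of_le inf_le_left (hy K).2, (hy N).1⟩

theorem exists_openNormalSubgroup_le_lt_index [T2Space H] [Infinite H] (N : OpenNormalSubgroup H)
    (k : ℕ) : ∃ N' : OpenNormalSubgroup H, N' ≤ N ∧ k < (N' : Subgroup H).index := by
  obtain ⟨s, hs⟩ := Infinite.exists_subset_card_eq H (k + 1)
  let T : Set H := (fun p : H × H => p.1⁻¹ * p.2) '' {p | p.1 ∈ s ∧ p.2 ∈ s ∧ p.1 ≠ p.2}
  have hT : T.Finite := ((s.finite_toSet.prod s.finite_toSet).subset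
    fun p hp => ⟨hp.1, hp.2.1⟩).image _
  have h1T : (1 : H) ∉ T := by
    rintro ⟨p, ⟨-, -, hp⟩, h⟩
    exact hp (inv_mul_eq_one.1 h)
  obtain ⟨K, hK⟩ := exist_openNormalSubgroup_sub_open_nhds_of_one hT.isClosed.isOpen_compl h1T
  refine ⟨K ⊓ N, inf_le_right, ?_⟩
  have hinj : Function.Injective
      fun a : s => (a : H ⧸ ((K ⊓ N : OpenNormalSubgroup H) : Subgroup H)) := by
    rintro ⟨a, ha⟩ ⟨b, hb⟩ hab
    by_contra hne
    exact hK (QuotientGroup.eq.1 hab).1 ⟨(a, b), ⟨ha, hb, fun h => hne (Subtype.ext h)⟩, rfl⟩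
  have := Nat.card_le_card_of_injective _ hinj
  rw [Nat.card_eq_finsetCard, hs, ← index_eq_card] at this
  omega

theorem exists_mem_topologicalGenerators_ne_mk_eq [T2Space H] [Infinite H] {x : H}
    (hx : x ∈ topologicalGenerators H) (N : OpenNormalSubgroup H) :
    ∃ y ∈ topologicalGenerators H, y ≠ x ∧ (y : H ⧸ (N : Subgroup H)) = x := by
  obtain ⟨N', hle, hidx⟩ := exists_openNormalSubgroup_le_lt_index N (2 * (N : Subgroup H).index)
  have hdvd := index_dvd_of_le (show (N' : Subgroup H) ≤ N from hle)
  obtain ⟨b, hbm, hb1, hbm1⟩ := Nat.exists_coprime_modEq_one_not_modEq_one hdvd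
    (Nat.totient_lt_totient_of_dvd hdvd hidx)
  obtain ⟨y, hy, hyx⟩ := exists_mem_topologicalGenerators_mk_eq_mk_pow hx N' hbm
  refine ⟨y, hy, ?_, ?_⟩
  · rintro rfl
    exact hbm1 ((mk_pow_eq_mk_pow_iff hy N').1 (by simpa using hyx.symm))
  · calc (y : H ⧸ (N : Subgroup H)) = (x : H ⧸ (N : Subgroup H)) ^ b := by
          rw [← QuotientGroup.mk_pow] at hyx ⊢
          exact QuotientGroup.eq.2 (hle (QuotientGroup.eq.1 hyx))
      _ = (x : H ⧸ (N : Subgroup H)) ^ 1 := (mk_pow_eq_mk_pow_iff hx N).2 hb1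
      _ = x := pow_one _

theorem preperfect_topologicalGenerators [T2Space H] [Infinite H] :
    Preperfect (topologicalGenerators H) := by
  intro x hx
  rw [accPt_iff_nhds]
  intro U hU
  obtain ⟨V, hVU, hV, hxV⟩ := mem_nhds_iff.1 hU
  obtain ⟨N, hN⟩ := exist_openNormalSubgroup_sub_open_nhds_of_one
    (hV.preimage (continuous_const_mul x)) (by simpa using hxV)
  obtain ⟨y, hy, hyx, hyN⟩ := exists_mem_topologicalGenerators_ne_mk_eq hx N
  exact ⟨y, ⟨hVU (by simpa using hN (QuotientGroup.eq.1 hyN.symm)), hy⟩, hyx⟩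

end ProfiniteGrp

open ProfiniteGrp in
/-- A procyclic group with fewer than `2^ℵ₀` topological generators is finite. -/
theorem stmt6 {H : Type*} [Group H] [TopologicalSpace H] [IsTopologicalGroup H]
    [CompactSpace H] [T2Space H] [TotallyDisconnectedSpace H]
    (hpro : ∃ h : H, (Subgroup.closure {h}).topologicalClosure = ⊤)
    (hcard : Cardinal.mk ↥{g : H | (Subgroup.closure {g}).topologicalClosure = ⊤}
      < Cardinal.continuum) :
    Finite H := by
  by_contra hfin
  have : Infinite H := not_finite_iff_infinite.1 hfin
  have hperfect : Perfect (topologicalGenerators H) :=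
    ⟨isClosed_topologicalGenerators, preperfect_topologicalGenerators⟩
  exact (hperfect.continuum_le_mk_of_isCompact hperfect.closed.isCompact hpro).not_gt hcard
end

section
/- Let G be a profinite group in which every element has finite order and such that, for a fixed positive integer m, the set of m-th powers {g^m : g ∈ G} has cardinality less than 2^ℵ₀. Let q be a prime not dividing m and let Q be a Sylow pro-q subgroup of G. Then Q is finite. -/
/-!
Since `q ∤ m`, raising to the `m`-th power permutes every cyclic `q`-group, so every element
of `Q` is an `m`-th power and `#Q < 𝔠`. On the other hand an infinite compact Hausdorff group
has no isolated points (one isolated point would make it discrete, hence finite), and a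
nonempty compact perfect set carries a Cantor scheme of nested disjoint perfect pieces, whose
branches give `2 ^ ℵ₀` distinct points.
-/

open Set Function Cardinal

theorem exists_pow_eq_of_coprime_orderOf {M : Type*} [Monoid M] {x : M} {m : ℕ}
    (h : m.Coprime (orderOf x)) : ∃ g : M, g ^ m = x := by
  obtain ⟨k, hk⟩ := exists_pow_eq_self_of_coprime h
  exact ⟨x ^ k, by rwa [← pow_mul, mul_comm, pow_mul]⟩

theorem exists_pow_eq_of_pow_prime_pow_eq_one {M : Type*} [Monoid M] {x : M} {m q n : ℕ}
    (hq : q.Prime) (hqm : ¬ q ∣ m) (hx : x ^ q ^ n = 1) : ∃ g : M, g ^ m = x :=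
  exists_pow_eq_of_coprime_orderOf <|
    ((hq.coprime_iff_not_dvd.mpr hqm).symm.pow_right n).coprime_dvd_right
      (orderOf_dvd_of_pow_eq_one hx)

section CantorScheme

variable {S : Type*} (root : S) (split : S → Bool → S)

def cantorBranch (σ : ℕ → Bool) : ℕ → S
  | 0 => root
  | n + 1 => split (cantorBranch σ n) (σ n)

theorem injective_of_mem_cantorBranch {X : Type*} (A : S → Set X)
    (hdisj : ∀ D b b', b ≠ b' → Disjoint (A (split D b)) (A (split D b')))
    {f : (ℕ → Bool) → X} (hf : ∀ σ n, f σ ∈ A (cantorBranch root split σ n)) :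
    Injective f := by
  intro σ τ hστ
  have hstep : ∀ n, cantorBranch root split σ n = cantorBranch root split τ n → σ n = τ n := by
    intro n hn
    by_contra hne
    have hσ := hf σ (n + 1)
    have hτ := hf τ (n + 1)
    rw [cantorBranch, hn, hστ] at hσ
    exact (hdisj _ _ _ hne).ne_of_mem hσ hτ rfl
  have hbranch : ∀ n, cantorBranch root split σ n = cantorBranch root split τ n := by
    intro n
    induction n with
    | zero => rfl
    | succ n ih => rw [cantorBranch, cantorBranch, ih, hstep n ih]
  exact funext fun n => hstep n (hbranch n)

end CantorScheme

theorem Perfect.continuum_le_mk {X : Type*} [TopologicalSpace X] [T25Space X] {C : Set X}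
    (hC : Perfect C) (hne : C.Nonempty) (hcpt : IsCompact C) : 𝔠 ≤ #C := by
  let S := {D : Set X // Perfect D ∧ D.Nonempty ∧ D ⊆ C}
  have hsplit : ∀ D : S, ∃ s : Bool → S,
      (∀ b, (s b).1 ⊆ D.1) ∧ ∀ b b', b ≠ b' → Disjoint (s b).1 (s b').1 := by
    rintro ⟨D, hD, hDne, hDC⟩
    obtain ⟨D₀, D₁, ⟨h₀, h₀ne, h₀D⟩, ⟨h₁, h₁ne, h₁D⟩, hdisj⟩ := hD.splitting hDne
    refine ⟨fun b => cond b ⟨D₀, h₀, h₀ne, h₀D.trans hDC⟩ ⟨D₁, h₁, h₁ne, h₁D.trans hDC⟩,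
      fun b => by cases b <;> assumption, ?_⟩
    rintro (_ | _) (_ | _) h
    exacts [absurd rfl h, hdisj.symm, hdisj, absurd rfl h]
  choose split hsub hdisj using hsplit
  let B := cantorBranch ⟨C, hC, hne, subset_rfl⟩ split
  have hnested (σ : ℕ → Bool) : (⋂ n, (B σ n).1).Nonempty :=
    IsCompact.nonempty_iInter_of_sequence_nonempty_isCompact_isClosed _
      (fun n => hsub _ _) (fun n => (B σ n).2.2.1) hcpt (fun n => (B σ n).2.1.closed)
  choose f hf using hnested
  have hfB (σ : ℕ → Bool) (n : ℕ) : f σ ∈ (B σ n).1 := mem_iInter.1 (hf σ) n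
  have hinj : Injective fun σ => (⟨f σ, hfB σ 0⟩ : C) := fun σ τ h =>
    injective_of_mem_cantorBranch _ split Subtype.val hdisj hfB (congrArg Subtype.val h)
  simpa using lift_mk_le_lift_mk_of_injective hinj

theorem perfectSpace_of_compactSpace_of_infinite (G : Type*) [Group G] [TopologicalSpace G]
    [IsTopologicalGroup G] [CompactSpace G] [Infinite G] : PerfectSpace G := by
  refine perfectSpace_iff_forall_not_isolated.mpr fun x => ?_
  by_contra hx
  rw [Filter.not_neBot, ← isOpen_singleton_iff_punctured_nhds] at hx
  have h1 : IsOpen ({1} : Set G) := by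
    simpa using (Homeomorph.mulLeft x⁻¹).isOpenMap _ hx
  have := discreteTopology_of_isOpen_singleton_one h1
  have := finite_of_compact_of_discrete (X := G)
  exact not_finite G

theorem continuum_le_mk_of_compactSpace_of_infinite (G : Type*) [Group G] [TopologicalSpace G]
    [IsTopologicalGroup G] [CompactSpace G] [T2Space G] [Infinite G] : 𝔠 ≤ #G := by
  have := perfectSpace_of_compactSpace_of_infinite G
  simpa using (PerfectSpace.univ_perfect (α := G)).continuum_le_mk univ_nonempty isCompact_univ

theorem stmt16_general {G : Type*} [Group G] [TopologicalSpace G] [IsTopologicalGroup G]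
    [CompactSpace G] [T2Space G]
    (m : ℕ)
    (hcard : Cardinal.mk ↥{x : G | ∃ g : G, g ^ m = x} < Cardinal.continuum)
    (q : ℕ) (hq : q.Prime) (hqm : ¬ q ∣ m)
    (Q : Subgroup G) (hQc : IsClosed (Q : Set G))
    (hQq : ∀ x ∈ Q, ∃ n : ℕ, x ^ q ^ n = 1) :
    Finite ↥Q := by
  by_contra hinf
  rw [not_finite_iff_infinite] at hinf
  have hpow : (Q : Set G) ⊆ {x : G | ∃ g : G, g ^ m = x} := fun x hx =>
    have ⟨_, hn⟩ := hQq x hx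
    exists_pow_eq_of_pow_prime_pow_eq_one hq hqm hn
  have : CompactSpace Q := isCompact_iff_compactSpace.mp hQc.isCompact
  exact (continuum_le_mk_of_compactSpace_of_infinite Q).not_gt
    ((mk_le_mk_of_subset hpow).trans_lt hcard)

/-- Let `G` be a periodic profinite group whose set of `m`-th powers has cardinality
less than `2^ℵ₀`, let `q` be a prime not dividing `m` and let `Q` be a Sylow pro-`q`
subgroup of `G` (a maximal closed subgroup all of whose elements have `q`-power
order).  Then `Q` is finite. -/
theorem stmt16 {G : Type*} [Group G] [TopologicalSpace G] [IsTopologicalGroup G]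
    [CompactSpace G] [T2Space G] [TotallyDisconnectedSpace G]
    (htors : ∀ g : G, IsOfFinOrder g) (m : ℕ) (hm : 0 < m)
    (hcard : Cardinal.mk ↥{x : G | ∃ g : G, g ^ m = x} < Cardinal.continuum)
    (q : ℕ) (hq : q.Prime) (hqm : ¬ q ∣ m)
    (Q : Subgroup G) (hQc : IsClosed (Q : Set G))
    (hQq : ∀ x ∈ Q, ∃ n : ℕ, x ^ q ^ n = 1)
    (hQmax : ∀ Q' : Subgroup G, IsClosed (Q' : Set G) →
      (∀ x ∈ Q', ∃ n : ℕ, x ^ q ^ n = 1) → Q ≤ Q' → Q' = Q) :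
    Finite ↥Q :=
  stmt16_general m hcard q hq hqm Q hQc hQq
end
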